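/- Let n ≥ 1 and let V : ℝⁿ → ℝ be twice continuously differentiable and bounded below. Then the Hamiltonian flow is complete: for every (x₀, ξ₀) ∈ ℝⁿ × ℝⁿ there exists a differentiable curve (x, ξ) : ℝ → ℝⁿ × ℝⁿ defined on all of ℝ with (x(0), ξ(0)) = (x₀, ξ₀), ẋ(t) = ξ(t) and ξ̇(t) = −∇V(x(t)) for all t ∈ ℝ. -/

import Mathlib

open scoped RealInnerProductSpace

noncomputable section

/-- Euclidean configuration space `ℝⁿ`. -/
abbrev Euc (n : ℕ) := EuclideanSpace ℝ (Fin n)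

open Set Metric
open scoped NNReal Topology

set_option linter.unusedSectionVars false

section Aux

variable {E : Type*} [NormedAddCommGroup E] [NormedSpace ℝ E] [CompleteSpace E]

/-- Global-in-time (on any `Icc (-T) T`) solution for a bounded, globally Lipschitz field. -/
lemma exists_sol_of_bdd_lipschitz (F : E → E) (K : ℝ≥0) (hK : LipschitzWith K F)
    (M : ℝ) (hM : ∀ z, ‖F z‖ ≤ M) (z₀ : E) (T : ℝ) (hT : 0 ≤ T) :
    ∃ f : ℝ → E, f 0 = z₀ ∧ ∀ t ∈ Icc (-T) T, HasDerivAt f (F (f t)) t := by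
  have hM0 : 0 ≤ M := (norm_nonneg _).trans (hM z₀)
  have hpl : IsPicardLindelof (fun _ : ℝ => F) (tmin := -(T+1)) (tmax := T+1)
      ⟨0, by constructor <;> linarith⟩ z₀ ⟨M*(T+1), by positivity⟩ 0 ⟨M, hM0⟩ K :=
    { lipschitzOnWith := fun t _ => hK.lipschitzOnWith
      continuousOn := fun x _ => continuousOn_const
      norm_le := fun t _ x _ => hM x
      mul_max_le := by
        show M * max (T + 1 - 0) (0 - -(T+1)) ≤ M*(T+1) - ((0:ℝ≥0):ℝ)
        rw [sub_zero, zero_sub, neg_neg, max_self, NNReal.coe_zero, sub_zero] }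
  obtain ⟨f, hf0, hf⟩ := hpl.exists_eq_forall_mem_Icc_hasDerivWithinAt₀
  refine ⟨f, hf0, fun t ht => ?_⟩
  have ht' : t ∈ Icc (-(T+1)) (T+1) := ⟨by linarith [ht.1], by linarith [ht.2]⟩
  exact (hf t ht').hasDerivAt (Icc_mem_nhds (by linarith [ht.1]) (by linarith [ht.2]))

/-- Glue solutions on larger and larger intervals into a global one. -/
lemma glue_solutions (G : E → E)
    (hloc : ∀ ρ : ℝ, ∃ K : ℝ≥0, LipschitzOnWith K G (closedBall (0:E) ρ))
    (z₀ : E) (f : ℕ → ℝ → E)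
    (h0 : ∀ k, f k 0 = z₀)
    (hderiv : ∀ (k : ℕ), ∀ t ∈ Icc (-((k:ℝ)+1)) ((k:ℝ)+1), HasDerivAt (f k) (G (f k t)) t) :
    ∃ F : ℝ → E, F 0 = z₀ ∧ ∀ t, HasDerivAt F (G (F t)) t := by
  have hcont : ∀ k : ℕ, ContinuousOn (f k) (Icc (-((k:ℝ)+1)) ((k:ℝ)+1)) := fun k =>
    continuousOn_of_forall_continuousAt fun t ht => (hderiv k t ht).continuousAt
  have hbd : ∀ k : ℕ, ∃ ρ : ℝ, ∀ t ∈ Icc (-((k:ℝ)+1)) ((k:ℝ)+1), ‖f k t‖ ≤ ρ := fun k =>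
    (isCompact_Icc).exists_bound_of_continuousOn (hcont k)
  have hagree : ∀ k m : ℕ, k ≤ m → ∀ t ∈ Ioo (-((k:ℝ)+1)) ((k:ℝ)+1), f k t = f m t := by
    intro k m hkm t ht
    obtain ⟨ρ₁, hρ₁⟩ := hbd k
    obtain ⟨ρ₂, hρ₂⟩ := hbd m
    obtain ⟨K, hK⟩ := hloc (max ρ₁ ρ₂)
    have hkm' : ((k:ℝ)) ≤ (m:ℝ) := by exact_mod_cast hkm
    have hsub : Icc (-((k:ℝ)+1)) ((k:ℝ)+1) ⊆ Icc (-((m:ℝ)+1)) ((m:ℝ)+1) :=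
      Icc_subset_Icc (by linarith) (by linarith)
    refine ODE_solution_unique_of_mem_Ioo (v := fun _ => G)
      (s := fun _ => closedBall (0:E) (max ρ₁ ρ₂)) (fun _ _ => hK)
      (t₀ := 0) (a := (-((k:ℝ)+1))) (b := ((k:ℝ)+1))
      ⟨by simp only [neg_lt, neg_zero]; positivity, by positivity⟩
      (fun s hs => ⟨hderiv k s (Ioo_subset_Icc_self hs), by
        simpa [mem_closedBall_zero_iff] using
          (hρ₁ s (Ioo_subset_Icc_self hs)).trans (le_max_left _ _)⟩)
      (fun s hs => ⟨hderiv m s (hsub (Ioo_subset_Icc_self hs)), by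
        simpa [mem_closedBall_zero_iff] using
          (hρ₂ s (hsub (Ioo_subset_Icc_self hs))).trans (le_max_right _ _)⟩)
      (by simp [h0]) ht
  set idx : ℝ → ℕ := fun s => ⌊|s|⌋.toNat with hidx
  have hidxle : ∀ s : ℝ, ((idx s : ℝ)) ≤ |s| := by
    intro s
    have h0' : (0:ℤ) ≤ ⌊|s|⌋ := Int.floor_nonneg.2 (abs_nonneg s)
    have : ((⌊|s|⌋.toNat : ℤ) : ℝ) ≤ |s| := by
      rw [Int.toNat_of_nonneg h0']; exact Int.floor_le _
    exact_mod_cast this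
  have hidxlt : ∀ s : ℝ, |s| < (idx s : ℝ) + 1 := by
    intro s
    have h0' : (0:ℤ) ≤ ⌊|s|⌋ := Int.floor_nonneg.2 (abs_nonneg s)
    have : |s| < ((⌊|s|⌋.toNat : ℤ) : ℝ) + 1 := by
      rw [Int.toNat_of_nonneg h0']; exact Int.lt_floor_add_one _
    exact_mod_cast this
  have hmem : ∀ s : ℝ, s ∈ Ioo (-((idx s : ℝ) + 1)) ((idx s : ℝ) + 1) := fun s =>
    ⟨by linarith [neg_abs_le s, hidxlt s], by linarith [le_abs_self s, hidxlt s]⟩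
  refine ⟨fun s => f (idx s) s, by simp [hidx, h0], fun t => ?_⟩
  set N := idx t with hN
  have hkey : ∀ s : ℝ, |s| < (N:ℝ) + 1 → f (idx s) s = f N s := by
    intro s hs
    have hle : idx s ≤ N := by
      have : (idx s : ℝ) < (N:ℝ) + 1 := lt_of_le_of_lt (hidxle s) hs
      exact_mod_cast Nat.lt_add_one_iff.mp (by exact_mod_cast this)
    exact hagree _ _ hle s (hmem s)
  have htN : |t| < (N:ℝ) + 1 := hidxlt t
  have heq : (fun s => f (idx s) s) =ᶠ[𝓝 t] f N := by
    have hopen : IsOpen {s : ℝ | |s| < (N:ℝ) + 1} := isOpen_lt (by continuity) continuous_const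
    exact Filter.eventuallyEq_of_mem (hopen.mem_nhds htN) hkey
  have hdN : HasDerivAt (f N) (G (f N t)) t :=
    hderiv N t (Ioo_subset_Icc_self (hmem t))
  simpa [hkey t htN] using hdN.congr_of_eventuallyEq heq

end Aux

section Aux2

variable {E : Type*} [NormedAddCommGroup E] [NormedSpace ℝ E]

/-- The scalar cutoff. -/
def cutoff (R : ℝ) (z : E) : ℝ := min 1 (max 0 (R - ‖z‖))

lemma cutoff_nonneg (R : ℝ) (z : E) : 0 ≤ cutoff R z := by
  unfold cutoff; positivity

lemma cutoff_le_one (R : ℝ) (z : E) : cutoff R z ≤ 1 := min_le_left _ _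

lemma cutoff_eq_one {R : ℝ} {z : E} (h : ‖z‖ ≤ R - 1) : cutoff R z = 1 := by
  unfold cutoff
  rw [min_eq_left]
  exact le_max_of_le_right (by linarith)

lemma cutoff_eq_zero {R : ℝ} {z : E} (h : R ≤ ‖z‖) : cutoff R z = 0 := by
  unfold cutoff
  rw [max_eq_left (by linarith), min_eq_right zero_le_one]

lemma cutoff_lipschitz (R : ℝ) : LipschitzWith 1 (cutoff R : E → ℝ) := by
  have hsub : LipschitzWith 1 (fun r : ℝ => R - r) := by
    apply LipschitzWith.of_dist_le_mul
    intro a b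
    rw [Real.dist_eq, Real.dist_eq, NNReal.coe_one, one_mul,
      show R - a - (R - b) = -(a - b) by ring, abs_neg]
  have h : LipschitzWith 1 (fun r : ℝ => min 1 (max 0 (R - r))) :=
    (hsub.const_max 0).const_min 1
  have h2 := h.comp (lipschitzWith_one_norm (E := E))
  rw [mul_one] at h2
  exact h2

/-- Truncated vector field. -/
def trunc (G : E → E) (R : ℝ) (z : E) : E := cutoff R z • G z

lemma trunc_eq {G : E → E} {R : ℝ} {z : E} (h : ‖z‖ ≤ R - 1) : trunc G R z = G z := by
  rw [trunc, cutoff_eq_one h, one_smul]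

lemma trunc_bdd {G : E → E} {R M : ℝ} (hM : ∀ z ∈ closedBall (0:E) R, ‖G z‖ ≤ M)
    (hM0 : 0 ≤ M) (z : E) : ‖trunc G R z‖ ≤ M := by
  rcases le_or_gt ‖z‖ R with h | h
  · rw [trunc, norm_smul, Real.norm_eq_abs, abs_of_nonneg (cutoff_nonneg R z)]
    calc cutoff R z * ‖G z‖ ≤ 1 * M := by
          apply mul_le_mul (cutoff_le_one R z) (hM z (by simpa [mem_closedBall_zero_iff]))
            (norm_nonneg _) zero_le_one
      _ = M := one_mul M
  · rw [trunc, cutoff_eq_zero h.le, zero_smul, norm_zero]; exact hM0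

lemma trunc_norm_le {G : E → E} {R M : ℝ} (hM : ∀ z ∈ closedBall (0:E) R, ‖G z‖ ≤ M)
    {z w : E} (hz : ‖z‖ ≤ R) (hw : R < ‖w‖) : ‖trunc G R z‖ ≤ M * ‖z - w‖ := by
  have hM0 : 0 ≤ M := (norm_nonneg _).trans (hM z (by simpa [mem_closedBall_zero_iff]))
  have h1 : cutoff R z ≤ ‖z - w‖ := by
    have h2 : cutoff R z ≤ max 0 (R - ‖z‖) := min_le_right _ _
    have h3 : max 0 (R - ‖z‖) ≤ ‖w‖ - ‖z‖ := max_le (by linarith) (by linarith)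
    have h4 : ‖w‖ - ‖z‖ ≤ ‖w - z‖ := norm_sub_norm_le w z
    rw [show ‖z - w‖ = ‖w - z‖ by rw [norm_sub_rev]]
    linarith
  rw [trunc, norm_smul, Real.norm_eq_abs, abs_of_nonneg (cutoff_nonneg R z)]
  calc cutoff R z * ‖G z‖ ≤ ‖z - w‖ * M :=
        mul_le_mul h1 (hM z (by simpa [mem_closedBall_zero_iff])) (norm_nonneg _)
          ((cutoff_nonneg R z).trans h1)
    _ = M * ‖z - w‖ := mul_comm _ _

lemma trunc_lipschitz (G : E → E) (R M : ℝ) (K : ℝ≥0) (hM0 : 0 ≤ M)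
    (hM : ∀ z ∈ closedBall (0:E) R, ‖G z‖ ≤ M)
    (hK : LipschitzOnWith K G (closedBall (0:E) R)) :
    LipschitzWith (M.toNNReal + K) (trunc G R) := by
  apply LipschitzWith.of_dist_le_mul
  intro z w
  have hcoe : ((M.toNNReal + K : ℝ≥0) : ℝ) = M + (K:ℝ) := by
    rw [NNReal.coe_add, Real.coe_toNNReal M hM0]
  rw [dist_eq_norm, dist_eq_norm, hcoe]
  have hK0 : (0:ℝ) ≤ K := K.coe_nonneg
  have hzw : (0:ℝ) ≤ ‖z - w‖ := norm_nonneg _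
  rcases le_or_gt ‖z‖ R with hz | hz <;> rcases le_or_gt ‖w‖ R with hw | hw
  · -- both inside
    have hmem : ∀ {u : E}, ‖u‖ ≤ R → u ∈ closedBall (0:E) R := fun h =>
      by simpa [mem_closedBall_zero_iff]
    have key : trunc G R z - trunc G R w
        = (cutoff R z - cutoff R w) • G z + cutoff R w • (G z - G w) := by
      simp only [trunc, sub_smul, smul_sub]; abel
    rw [key]
    have h1 : ‖(cutoff R z - cutoff R w) • G z‖ ≤ ‖z - w‖ * M := by
      rw [norm_smul, Real.norm_eq_abs]
      apply mul_le_mul _ (hM z (hmem hz)) (norm_nonneg _) hzw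
      have := (cutoff_lipschitz R (E := E)).dist_le_mul z w
      rwa [Real.dist_eq, NNReal.coe_one, one_mul, dist_eq_norm] at this
    have h2 : ‖cutoff R w • (G z - G w)‖ ≤ (K:ℝ) * ‖z - w‖ := by
      rw [norm_smul, Real.norm_eq_abs, abs_of_nonneg (cutoff_nonneg R w)]
      have hGl : ‖G z - G w‖ ≤ (K:ℝ) * ‖z - w‖ := by
        have := hK.dist_le_mul z (hmem hz) w (hmem hw)
        rwa [dist_eq_norm, dist_eq_norm] at this
      calc cutoff R w * ‖G z - G w‖ ≤ 1 * ((K:ℝ) * ‖z - w‖) :=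
            mul_le_mul (cutoff_le_one R w) hGl (norm_nonneg _) zero_le_one
        _ = (K:ℝ) * ‖z - w‖ := one_mul _
    calc ‖_ + _‖ ≤ _ + _ := norm_add_le _ _
      _ ≤ ‖z - w‖ * M + (K:ℝ) * ‖z - w‖ := add_le_add h1 h2
      _ ≤ (M + (K:ℝ)) * ‖z - w‖ := by ring_nf; linarith
  · -- z inside, w outside
    rw [show trunc G R w = 0 by rw [trunc, cutoff_eq_zero hw.le, zero_smul], sub_zero]
    calc ‖trunc G R z‖ ≤ M * ‖z - w‖ := trunc_norm_le hM hz hw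
      _ ≤ (M + (K:ℝ)) * ‖z - w‖ := by nlinarith
  · -- w inside, z outside
    rw [show trunc G R z = 0 by rw [trunc, cutoff_eq_zero hz.le, zero_smul], zero_sub, norm_neg]
    have := trunc_norm_le hM hw hz
    rw [show ‖w - z‖ = ‖z - w‖ by rw [norm_sub_rev]] at this
    calc ‖trunc G R w‖ ≤ M * ‖z - w‖ := this
      _ ≤ (M + (K:ℝ)) * ‖z - w‖ := by nlinarith
  · simp only [trunc, cutoff_eq_zero hz.le, cutoff_eq_zero hw.le, zero_smul, sub_zero,
      norm_zero]
    positivity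

end Aux2

section Ham

variable {n : ℕ} {V : Euc n → ℝ}

/-- The Hamiltonian vector field. -/
def ham (V : Euc n → ℝ) (z : Euc n × Euc n) : Euc n × Euc n := (z.2, -gradient V z.1)

lemma contDiff_gradient (hV : ContDiff ℝ 2 V) : ContDiff ℝ 1 (gradient V) := by
  have h1 : ContDiff ℝ 1 (fderiv ℝ V) := hV.fderiv_right (by norm_num)
  have h2 : gradient V = fun y =>
      (InnerProductSpace.toDual ℝ (Euc n)).symm (fderiv ℝ V y) := rfl
  rw [h2]
  exact (InnerProductSpace.toDual ℝ (Euc n)).symm.toContinuousLinearEquiv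
    |>.toContinuousLinearMap.contDiff.comp h1

lemma contDiff_ham (hV : ContDiff ℝ 2 V) : ContDiff ℝ 1 (ham V) :=
  contDiff_snd.prodMk (((contDiff_gradient hV).comp contDiff_fst).neg)

lemma loclip_of_contDiff {E : Type*} [NormedAddCommGroup E] [NormedSpace ℝ E] [ProperSpace E]
    (G : E → E) (hG : ContDiff ℝ 1 G) (ρ : ℝ) :
    ∃ K : ℝ≥0, LipschitzOnWith K G (closedBall (0:E) ρ) := by
  obtain ⟨c, hc⟩ := (isCompact_closedBall (0:E) ρ).exists_bound_of_continuousOn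
    ((hG.continuous_fderiv one_ne_zero).continuousOn)
  refine ⟨c.toNNReal, Convex.lipschitzOnWith_of_nnnorm_hasFDerivWithin_le
    (f' := fun x => fderiv ℝ G x)
    (fun x hx => ((hG.differentiable one_ne_zero) x).hasFDerivAt.hasFDerivWithinAt)
    (fun x hx => ?_) (convex_closedBall _ _)⟩
  rw [← norm_toNNReal]
  exact Real.toNNReal_mono (hc x hx)

/-- Component derivative facts. -/
lemma hasDerivAt_fst {f : ℝ → Euc n × Euc n} {d : Euc n × Euc n} {t : ℝ}
    (h : HasDerivAt f d t) : HasDerivAt (fun s => (f s).1) d.1 t :=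
  (ContinuousLinearMap.fst ℝ (Euc n) (Euc n)).hasFDerivAt.comp_hasDerivAt t h

lemma hasDerivAt_snd {f : ℝ → Euc n × Euc n} {d : Euc n × Euc n} {t : ℝ}
    (h : HasDerivAt f d t) : HasDerivAt (fun s => (f s).2) d.2 t :=
  (ContinuousLinearMap.snd ℝ (Euc n) (Euc n)).hasFDerivAt.comp_hasDerivAt t h

/-- Energy derivative: along a Hamiltonian trajectory the energy is conserved. -/
lemma energy_deriv (hV : ContDiff ℝ 2 V) {f : ℝ → Euc n × Euc n} {t : ℝ}
    (hx : HasDerivAt (fun s => (f s).1) (f t).2 t)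
    (hξ : HasDerivAt (fun s => (f s).2) (-gradient V ((f t).1)) t) :
    HasDerivAt (fun s => ⟪(f s).2, (f s).2⟫ + 2 * V ((f s).1)) 0 t := by
  have hVd : HasFDerivAt V (InnerProductSpace.toDual ℝ (Euc n) (gradient V ((f t).1)))
      ((f t).1) := ((hV.differentiable (by norm_num)) _).hasGradientAt
  have h1 : HasDerivAt (fun s => ⟪(f s).2, (f s).2⟫)
      (⟪(f t).2, -gradient V ((f t).1)⟫ + ⟪-gradient V ((f t).1), (f t).2⟫) t :=
    HasDerivAt.inner ℝ hξ hξ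
  have h2 : HasDerivAt (fun s => V ((f s).1))
      (⟪gradient V ((f t).1), (f t).2⟫) t := by
    have := hVd.comp_hasDerivAt t hx
    simp only [InnerProductSpace.toDual_apply_apply] at this
    exact this
  have h3 := h1.add ((h2.const_mul (2:ℝ)))
  refine h3.congr_deriv ?_
  rw [inner_neg_right, inner_neg_left, real_inner_comm ((f t).2)]
  ring

lemma stays (hV : ContDiff ℝ 2 V) (m : ℝ) (hm : ∀ y, m ≤ V y)
    (x₀ ξ₀ : Euc n) (T C B R : ℝ) (hT : 0 ≤ T) (hC0 : 0 ≤ C)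
    (hC : ‖ξ₀‖^2 + 2*(V x₀ - m) ≤ C^2)
    (hB1 : ‖x₀‖ + C*T ≤ B) (hB2 : C ≤ B)
    (hR : R = B + 2)
    (f : ℝ → Euc n × Euc n) (hf0 : f 0 = (x₀, ξ₀))
    (hsol : ∀ t ∈ Icc 0 T, HasDerivAt f (trunc (ham V) R (f t)) t) :
    ∀ t ∈ Icc 0 T, ‖f t‖ ≤ B + 1 := by
  have hfc : ∀ t ∈ Icc 0 T, ContinuousAt f t := fun t ht => (hsol t ht).continuousAt
  have hx₀B : ‖x₀‖ ≤ B := by nlinarith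
  have hξ₀C : ‖ξ₀‖ ≤ C := by nlinarith [hm x₀, norm_nonneg ξ₀]
  have hf0n : ‖f 0‖ ≤ B + 1 := by
    rw [hf0, Prod.norm_def]
    exact max_le (by linarith) (by linarith)
  -- the key improvement step
  have key : ∀ τ ∈ Icc 0 T, (∀ s ∈ Icc 0 τ, ‖f s‖ ≤ B + 1) →
      ∀ s ∈ Icc 0 τ, ‖f s‖ ≤ B := by
    intro τ hτ hbound s hs
    have hsub : Icc 0 τ ⊆ Icc 0 T := Icc_subset_Icc le_rfl hτ.2
    have hsol' : ∀ u ∈ Icc 0 τ, HasDerivAt f (ham V (f u)) u := by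
      intro u hu
      have := hsol u (hsub hu)
      rwa [trunc_eq (by rw [hR]; linarith [hbound u hu])] at this
    have hx : ∀ u ∈ Icc 0 τ, HasDerivAt (fun s => (f s).1) ((f u).2) u := fun u hu =>
      hasDerivAt_fst (hsol' u hu)
    have hξ : ∀ u ∈ Icc 0 τ, HasDerivAt (fun s => (f s).2) (-gradient V ((f u).1)) u :=
      fun u hu => hasDerivAt_snd (hsol' u hu)
    -- energy conservation
    set e : ℝ → ℝ := fun s => ⟪(f s).2, (f s).2⟫ + 2 * V ((f s).1) with he_def
    have hcons : ∀ u ∈ Icc 0 τ, e u = e 0 := by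
      intro u hu
      have h0m : (0:ℝ) ∈ Icc 0 τ := ⟨le_rfl, hs.1.trans hs.2⟩
      have := Convex.norm_image_sub_le_of_norm_hasDerivWithin_le
        (f := e) (f' := fun _ => (0:ℝ)) (s := Icc 0 τ) (C := 0)
        (fun u hu => (energy_deriv hV (hx u hu) (hξ u hu)).hasDerivWithinAt)
        (fun _ _ => norm_zero.le) (convex_Icc 0 τ) h0m hu
      exact sub_eq_zero.mp (by simpa using this)
    have hξC : ∀ u ∈ Icc 0 τ, ‖(f u).2‖ ≤ C := by
      intro u hu
      have h1 := hcons u hu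
      rw [he_def] at h1
      simp only [hf0] at h1
      rw [real_inner_self_eq_norm_sq, real_inner_self_eq_norm_sq] at h1
      have h2 := hm ((f u).1)
      nlinarith [norm_nonneg ((f u).2)]
    have hxB : ∀ u ∈ Icc 0 τ, ‖(f u).1‖ ≤ B := by
      intro u hu
      have h0m : (0:ℝ) ∈ Icc 0 τ := ⟨le_rfl, hs.1.trans hs.2⟩
      have := Convex.norm_image_sub_le_of_norm_hasDerivWithin_le
        (f := fun s => (f s).1) (f' := fun u => (f u).2) (s := Icc 0 τ) (C := C)
        (fun u hu => (hx u hu).hasDerivWithinAt)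
        (fun u hu => hξC u hu) (convex_Icc 0 τ) h0m hu
      simp only [hf0, sub_zero, Real.norm_eq_abs] at this
      rw [abs_of_nonneg hu.1] at this
      have : ‖(f u).1‖ - ‖x₀‖ ≤ C * u := le_trans (norm_sub_norm_le _ _) this
      have hCu : C * u ≤ C * T := mul_le_mul_of_nonneg_left (hu.2.trans hτ.2) hC0
      linarith
    rw [Prod.norm_def]
    exact max_le (hxB s hs) ((hξC s hs).trans hB2)
  -- the escape-time argument
  set S : Set ℝ := {t ∈ Icc 0 T | ∀ s ∈ Icc 0 t, ‖f s‖ ≤ B + 1} with hS_def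
  have h0S : (0:ℝ) ∈ S := ⟨⟨le_rfl, hT⟩, fun s hs => by
    rw [show s = 0 by linarith [hs.1, hs.2]]; exact hf0n⟩
  have hSbdd : BddAbove S := ⟨T, fun t ht => ht.1.2⟩
  have hSne : S.Nonempty := ⟨0, h0S⟩
  set t₁ := sSup S with ht₁_def
  have ht₁0 : 0 ≤ t₁ := le_csSup hSbdd h0S
  have ht₁T : t₁ ≤ T := csSup_le hSne fun t ht => ht.1.2
  have ht₁S : t₁ ∈ S := by
    refine ⟨⟨ht₁0, ht₁T⟩, fun s hs => ?_⟩
    rcases eq_or_lt_of_le hs.2 with heq | hlt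
    · -- s = t₁ : continuity
      rcases eq_or_lt_of_le ht₁0 with h0 | h0
      · rw [heq, ← h0]; exact hf0n
      · -- t₁ > 0, approach from the left
        rw [heq]
        have hcont : ContinuousAt (fun u => ‖f u‖) t₁ :=
          (hfc t₁ ⟨ht₁0, ht₁T⟩).norm
        have hev : ∀ᶠ u in 𝓝[<] t₁, ‖f u‖ ≤ B + 1 := by
          filter_upwards [Ioo_mem_nhdsLT h0] with u hu
          obtain ⟨t', ht'S, ht'⟩ := exists_lt_of_lt_csSup hSne hu.2
          exact ht'S.2 u ⟨hu.1.le, ht'.le⟩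
        exact le_of_tendsto (hcont.continuousWithinAt (s := Iio t₁)) hev
    · obtain ⟨t', ht'S, ht'⟩ := exists_lt_of_lt_csSup hSne hlt
      exact ht'S.2 s ⟨hs.1, ht'.le⟩
  -- t₁ = T
  have ht₁T' : t₁ = T := by
    by_contra hne
    have hlt : t₁ < T := lt_of_le_of_ne ht₁T hne
    have himp := key t₁ ⟨ht₁0, ht₁T⟩ ht₁S.2
    have hft₁ : ‖f t₁‖ ≤ B := himp t₁ ⟨ht₁0, le_rfl⟩
    -- continuity gives a slightly larger element of S
    have hcont : ContinuousAt (fun u => ‖f u‖) t₁ := (hfc t₁ ⟨ht₁0, ht₁T⟩).norm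
    have hev : ∀ᶠ u in 𝓝 t₁, ‖f u‖ < B + 1 := by
      have hmem : Iio (B+1) ∈ 𝓝 ‖f t₁‖ := Iio_mem_nhds (by linarith)
      exact hcont hmem
    obtain ⟨δ, hδ0, hδ⟩ := Metric.eventually_nhds_iff.mp hev
    set t₂ := min T (t₁ + δ/2) with ht₂_def
    have ht₂S : t₂ ∈ S := by
      refine ⟨⟨le_min hT (by linarith), min_le_left _ _⟩, fun s hs => ?_⟩
      rcases le_or_gt s t₁ with h | h
      · exact ht₁S.2 s ⟨hs.1, h⟩
      · have h1 : s ≤ t₁ + δ/2 := hs.2.trans (min_le_right _ _)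
        have h2 : dist s t₁ < δ := by
          rw [Real.dist_eq, abs_of_pos (by linarith)]; linarith
        exact (hδ h2).le
    have hle : t₂ ≤ t₁ := le_csSup hSbdd ht₂S
    have ht₂gt : t₁ < t₂ := lt_min hlt (by linarith)
    linarith
  intro t ht
  rw [← ht₁T'] at ht
  exact ht₁S.2 t ht

def flipL (n : ℕ) : (Euc n × Euc n) →L[ℝ] (Euc n × Euc n) :=
  (ContinuousLinearMap.fst ℝ (Euc n) (Euc n)).prod (-(ContinuousLinearMap.snd ℝ (Euc n) (Euc n)))

lemma flipL_apply (p : Euc n × Euc n) : flipL n p = (p.1, -p.2) := rfl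

lemma norm_flipL (p : Euc n × Euc n) : ‖flipL n p‖ = ‖p‖ := by
  rw [flipL_apply, Prod.norm_def, Prod.norm_def, norm_neg]

lemma cutoff_flipL (R : ℝ) (p : Euc n × Euc n) : cutoff R (flipL n p) = cutoff R p := by
  unfold cutoff; rw [norm_flipL]

lemma reverse_sol {R T : ℝ} {f : ℝ → Euc n × Euc n}
    (hsol : ∀ t ∈ Icc (-T) T, HasDerivAt f (trunc (ham V) R (f t)) t) :
    ∀ t ∈ Icc (-T) T,
      HasDerivAt (fun s => flipL n (f (-s))) (trunc (ham V) R (flipL n (f (-t)))) t := by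
  intro t ht
  have hmt : -t ∈ Icc (-T) T := ⟨by linarith [ht.2], by linarith [ht.1]⟩
  have h1 : HasDerivAt (fun s : ℝ => f (-s)) ((-1 : ℝ) • trunc (ham V) R (f (-t))) t := by
    have := HasDerivAt.scomp (h := fun s : ℝ => -s) (x := t)
      (hsol (-t) hmt) (hasDerivAt_neg t)
    exact this
  have h2 := (flipL n).hasFDerivAt.comp_hasDerivAt t h1
  have key : flipL n ((-1 : ℝ) • trunc (ham V) R (f (-t)))
      = trunc (ham V) R (flipL n (f (-t))) := by
    set w := f (-t) with hw
    rw [trunc, trunc, cutoff_flipL]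
    rw [show ((-1:ℝ) • (cutoff R w • ham V w)) = cutoff R w • (-(ham V w)) by
      rw [neg_one_smul, ← smul_neg], map_smul]
    congr 1
    simp [ham, flipL_apply, Prod.ext_iff]
  rw [← key]
  exact h2

end Ham

/-- **Completeness of the Hamiltonian flow.**  If `V : ℝⁿ → ℝ` is `C²` and bounded
below, then through every initial point `(x₀, ξ₀)` there is a globally defined
Hamiltonian trajectory: a differentiable curve `(x, ξ) : ℝ → ℝⁿ × ℝⁿ` with
`(x 0, ξ 0) = (x₀, ξ₀)`, `ẋ = ξ` and `ξ̇ = −∇V(x)` on all of `ℝ`. -/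
theorem hamiltonian_flow_complete_of_bddBelow
    (n : ℕ) (hn : 1 ≤ n)
    (V : Euc n → ℝ) (hV : ContDiff ℝ 2 V)
    (hbdd : BddBelow (Set.range V)) :
    ∀ x₀ ξ₀ : Euc n, ∃ x ξ : ℝ → Euc n,
      x 0 = x₀ ∧ ξ 0 = ξ₀ ∧
      (∀ t : ℝ, HasDerivAt x (ξ t) t) ∧
      (∀ t : ℝ, HasDerivAt ξ (-gradient V (x t)) t) := by
  intro x₀ ξ₀
  set G := ham V with hG
  have hGc : ContDiff ℝ 1 G := contDiff_ham hV
  have hloc : ∀ ρ : ℝ, ∃ K : NNReal, LipschitzOnWith K G (closedBall 0 ρ) :=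
    loclip_of_contDiff G hGc
  set z₀ : Euc n × Euc n := (x₀, ξ₀) with hz₀
  set m := sInf (Set.range V) with hm_def
  have hm : ∀ y, m ≤ V y := fun y => csInf_le hbdd ⟨y, rfl⟩
  set C := Real.sqrt (‖ξ₀‖^2 + 2*(V x₀ - m)) with hC_def
  have hC0 : 0 ≤ C := Real.sqrt_nonneg _
  have hCsq : ‖ξ₀‖^2 + 2*(V x₀ - m) ≤ C^2 := by
    rw [hC_def, Real.sq_sqrt (by nlinarith [hm x₀, sq_nonneg ‖ξ₀‖])]
  have hsolk : ∀ k : ℕ, ∃ f : ℝ → Euc n × Euc n, f 0 = z₀ ∧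
      ∀ t ∈ Icc (-((k:ℝ)+1)) ((k:ℝ)+1), HasDerivAt f (G (f t)) t := by
    intro k
    set T : ℝ := (k:ℝ) + 1 with hT_def
    have hT : 0 ≤ T := by positivity
    set B : ℝ := ‖x₀‖ + C*T + C with hB_def
    set R : ℝ := B + 2 with hR_def
    have hB1 : ‖x₀‖ + C*T ≤ B := by rw [hB_def]; linarith
    have hB2 : C ≤ B := by
      rw [hB_def]
      nlinarith [norm_nonneg x₀, mul_nonneg hC0 hT]
    obtain ⟨M₀, hM₀⟩ := (isCompact_closedBall (0 : Euc n × Euc n) R).exists_bound_of_continuousOn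
      (hGc.continuous.continuousOn)
    set M := max M₀ 0 with hM_def
    have hM : ∀ z ∈ closedBall (0 : Euc n × Euc n) R, ‖G z‖ ≤ M := fun z hz =>
      (hM₀ z hz).trans (le_max_left _ _)
    have hM0 : 0 ≤ M := le_max_right _ _
    obtain ⟨K, hK⟩ := hloc R
    have hlip := trunc_lipschitz G R M K hM0 hM hK
    have hbd := fun z => trunc_bdd hM hM0 z
    obtain ⟨f, hf0, hsol⟩ := exists_sol_of_bdd_lipschitz (trunc G R) _ hlip M hbd z₀ T hT
    have hfwd := stays hV m hm x₀ ξ₀ T C B R hT hC0 hCsq hB1 hB2 hR_def f hf0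
      (fun t ht => hsol t ⟨by linarith [ht.1], ht.2⟩)
    have hrev := reverse_sol hsol
    have hbwd := stays hV m hm x₀ (-ξ₀) T C B R hT hC0 (by rwa [norm_neg]) hB1 hB2 hR_def
      (fun s => flipL n (f (-s)))
      (by show flipL n (f (-0)) = (x₀, -ξ₀); rw [neg_zero, hf0]; rfl)
      (fun t ht => hrev t ⟨by linarith [ht.1], ht.2⟩)
    have hall : ∀ t ∈ Icc (-T) T, ‖f t‖ ≤ B + 1 := by
      intro t ht
      rcases le_or_gt 0 t with h | h
      · exact hfwd t ⟨h, ht.2⟩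
      · have := hbwd (-t) ⟨by linarith, by linarith [ht.1]⟩
        simpa [norm_flipL] using this
    refine ⟨f, hf0, fun t ht => ?_⟩
    have := hsol t ht
    rwa [trunc_eq (by rw [hR_def]; linarith [hall t ht])] at this
  choose fk hfk0 hfk using hsolk
  obtain ⟨F, hF0, hF⟩ := glue_solutions G hloc z₀ fk hfk0 hfk
  refine ⟨fun t => (F t).1, fun t => (F t).2, by simp [hF0, hz₀], by simp [hF0, hz₀], fun t => ?_, fun t => ?_⟩
  · have := hasDerivAt_fst (hF t)
    simpa [hG, ham] using this
  · have := hasDerivAt_snd (hF t)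
    simpa [hG, ham] using this

end
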